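/- For every n×n real matrix A that is tropical totally nonnegative (A ∈ TNtrop(ℝ)), the matrix W := φ(A) satisfies the weak trapeze and weak parallelogram inequalities and the tropical transfer matrix T(W) equals A entrywise; in particular every tropical totally nonnegative matrix with real entries is the tropical transfer matrix of the canonical planar network G_n for some real weight matrix. -/

import Mathlib

open Finset

/-- Truncated predecessor in `Fin n` (1-indexed entry `i-1`). -/
def fpred {n : ℕ} (j : Fin n) : Fin n :=
  ⟨j.val - 1, Nat.lt_of_le_of_lt (Nat.sub_le _ _) j.isLt⟩

/-- `ψ(W)_{i,j}` is the tropical weight of the uppermost path from source `i`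
to target `j` in the canonical planar network `G_n`. -/
def psi (n : ℕ) (W : Matrix (Fin n) (Fin n) ℝ) : Matrix (Fin n) (Fin n) ℝ :=
  fun i j => if i ≤ j then ∑ t ∈ Finset.Icc i j, W i t else ∑ t ∈ Finset.Icc j i, W t j

/-- The map `φ`, inverse of `ψ`. -/
def phi (n : ℕ) (A : Matrix (Fin n) (Fin n) ℝ) : Matrix (Fin n) (Fin n) ℝ :=
  fun i j =>
    if i = j then A i j
    else if i < j then A i j - A i (fpred j)
    else A i j - A (fpred i) j

/-- Weak trapeze inequalities. -/
def WeakTrapeze (n : ℕ) (W : Matrix (Fin n) (Fin n) ℝ) : Prop :=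
  ∀ i : Fin n, 0 < i.val →
    W i (fpred i) + W (fpred i) (fpred i) + W (fpred i) i ≤ W i i

/-- Strict trapeze inequalities. -/
def StrictTrapeze (n : ℕ) (W : Matrix (Fin n) (Fin n) ℝ) : Prop :=
  ∀ i : Fin n, 0 < i.val →
    W i (fpred i) + W (fpred i) (fpred i) + W (fpred i) i < W i i

/-- Weak parallelogram inequalities. -/
def WeakPara (n : ℕ) (W : Matrix (Fin n) (Fin n) ℝ) : Prop :=
  ∀ i j : Fin n, ∀ _h : j.val + 2 ≤ i.val,
    W i j ≤ W i ⟨j.val + 1, by have := i.isLt; omega⟩ ∧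
    W j i ≤ W ⟨j.val + 1, by have := i.isLt; omega⟩ i

/-- Strict parallelogram inequalities. -/
def StrictPara (n : ℕ) (W : Matrix (Fin n) (Fin n) ℝ) : Prop :=
  ∀ i j : Fin n, ∀ _h : j.val + 2 ≤ i.val,
    W i j < W i ⟨j.val + 1, by have := i.isLt; omega⟩ ∧
    W j i < W ⟨j.val + 1, by have := i.isLt; omega⟩ i

/-- Maximum, over the permutations of sign `ε`, of the tropical weight of the
permutation in the `k × k` matrix `B` (computed in `WithBot ℝ`, the maximum over
the empty set being `⊥ = -∞`). -/
def tropPermSup (k : ℕ) (ε : ℤˣ) (B : Matrix (Fin k) (Fin k) (WithBot ℝ)) : WithBot ℝ :=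
  (Finset.univ.filter fun σ : Equiv.Perm (Fin k) => Equiv.Perm.sign σ = ε).sup
    fun σ => ∑ i, B i (σ i)

/-- Tropical total nonnegativity of a matrix over `ℝ ∪ {-∞}`. -/
def IsTropTN (n : ℕ) (A : Matrix (Fin n) (Fin n) (WithBot ℝ)) : Prop :=
  ∀ (k : ℕ) (r c : Fin k → Fin n), StrictMono r → StrictMono c →
    tropPermSup k (-1) (A.submatrix r c) ≤ tropPermSup k 1 (A.submatrix r c)

/-- Tropical total positivity of a real matrix. -/
def IsTropTP (n : ℕ) (A : Matrix (Fin n) (Fin n) ℝ) : Prop :=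
  ∀ (k : ℕ), 2 ≤ k → ∀ (r c : Fin k → Fin n), StrictMono r → StrictMono c →
    tropPermSup k (-1) ((A.map ((↑) : ℝ → WithBot ℝ)).submatrix r c) <
      tropPermSup k 1 ((A.map ((↑) : ℝ → WithBot ℝ)).submatrix r c)

/-- Max-plus matrix product. -/
def tropMul {l m p : ℕ} (A : Matrix (Fin l) (Fin m) (WithBot ℝ))
    (B : Matrix (Fin m) (Fin p) (WithBot ℝ)) : Matrix (Fin l) (Fin p) (WithBot ℝ) :=
  fun i j => Finset.univ.sup fun k => A i k + B k j

/-- Tropical identity matrix. -/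
def tropId (n : ℕ) : Matrix (Fin n) (Fin n) (WithBot ℝ) :=
  fun i j => if i = j then 0 else ⊥

/-- Tropical elementary Jacobi matrix `x_i(s)` (0-indexed: `s` in position `(i, i+1)`). -/
def xUp (n : ℕ) (i : ℕ) (s : ℝ) : Matrix (Fin n) (Fin n) (WithBot ℝ) :=
  fun a b => if a = b then 0 else if a.val = i ∧ b.val = i + 1 then (s : WithBot ℝ) else ⊥

/-- Tropical elementary Jacobi matrix `x̄_i(s)` (0-indexed: `s` in position `(i+1, i)`). -/
def xLow (n : ℕ) (i : ℕ) (s : ℝ) : Matrix (Fin n) (Fin n) (WithBot ℝ) :=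
  fun a b => if a = b then 0 else if a.val = i + 1 ∧ b.val = i then (s : WithBot ℝ) else ⊥

/-- Tropical elementary Jacobi matrix `x∘_i(s)` (0-indexed diagonal matrix,
`s` in position `(i, i)`). -/
def xDiag (n : ℕ) (i : ℕ) (s : ℝ) : Matrix (Fin n) (Fin n) (WithBot ℝ) :=
  fun a b => if a = b then (if a.val = i then (s : WithBot ℝ) else 0) else ⊥

/-- Entry of `W` looked up with natural-number (0-based) indices. -/
def wnat (n : ℕ) (W : Matrix (Fin n) (Fin n) ℝ) (a b : ℕ) : ℝ :=
  if h : a < n ∧ b < n then W ⟨a, h.1⟩ ⟨b, h.2⟩ else 0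

/-- The left part `L(W)` of the canonical planar network:
`L(W) = ⊙_{k=1}^{n−1} ⊙_{t=1}^{k} x̄_{n−k+t−1}(W_{n−k+t, t})` (1-indexed). -/
def Lmat (n : ℕ) (W : Matrix (Fin n) (Fin n) ℝ) : Matrix (Fin n) (Fin n) (WithBot ℝ) :=
  ((List.range (n - 1)).flatMap fun k => (List.range (k + 1)).map fun t =>
      xLow n (n - k + t - 2) (wnat n W (n - k + t - 1) t)).foldl tropMul (tropId n)

/-- The diagonal part `D(W) = x∘_1(W_{1,1}) ⊙ ⋯ ⊙ x∘_n(W_{n,n})` (1-indexed). -/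
def Dmat (n : ℕ) (W : Matrix (Fin n) (Fin n) ℝ) : Matrix (Fin n) (Fin n) (WithBot ℝ) :=
  ((List.range n).map fun i => xDiag n i (wnat n W i i)).foldl tropMul (tropId n)

/-- The tropical transfer matrix of the canonical totally connected planar
network `G_n` with weight matrix `W`: `T(W) = L(W) ⊙ D(W) ⊙ (L(Wᵀ))ᵀ`. -/
def Tmat (n : ℕ) (W : Matrix (Fin n) (Fin n) ℝ) : Matrix (Fin n) (Fin n) (WithBot ℝ) :=
  tropMul (tropMul (Lmat n W) (Dmat n W)) (Matrix.transpose (Lmat n W.transpose))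

/-!
The `2 × 2` minors of a tropical totally nonnegative `A` are Monge inequalities, and for
`W = φ(A)` these are the weak trapeze and parallelogram inequalities.

Under the row parallelogram inequalities, `L(W)_{i,j}` is the weight `∑_{r=j+1}^{i} W_{r,j}` of the
path straight down column `j`: by induction on `n`, since `L` of size `n + 2` is `diag(0, L(W'))`
followed by a single chain of `x̄`'s. So `T(W)_{i,j}` is the maximum, over `c ≤ min(i, j)`, of the
weights of the paths crossing the diagonal at `c`. The trapeze and parallelogram inequalities make
this weight nondecreasing in `c`, so `T(W) = ψ(W)`, and `ψ(φ(A)) = A` by telescoping.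
-/

open scoped Matrix

section TropicalMatrix

variable {l m p : ℕ}

lemma tropMul_apply_eq_sup_of_support (A : Matrix (Fin l) (Fin m) (WithBot ℝ))
    (B : Matrix (Fin m) (Fin p) (WithBot ℝ)) {i : Fin l} {j : Fin p} (s : Finset (Fin m))
    (hs : ∀ k ∉ s, B k j = ⊥) : tropMul A B i j = s.sup fun k => A i k + B k j := by
  refine le_antisymm (Finset.sup_le fun k _ => ?_) (sup_mono (subset_univ s))
  by_cases hk : k ∈ s
  · exact le_sup (f := fun k => A i k + B k j) hk
  · simp [hs k hk]

lemma tropMul_xDiag_apply (F : Matrix (Fin l) (Fin m) (WithBot ℝ)) (t : ℕ) (s : ℝ)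
    (i : Fin l) (j : Fin m) :
    tropMul F (xDiag m t s) i j = F i j + if j.val = t then (s : WithBot ℝ) else 0 := by
  rw [tropMul_apply_eq_sup_of_support _ _ {j} fun k hk => if_neg (by simpa using hk)]
  simp [xDiag]

lemma tropMul_xLow_apply (F : Matrix (Fin l) (Fin m) (WithBot ℝ)) {t : ℕ} (ht : t + 1 < m)
    (s : ℝ) (i : Fin l) (j : Fin m) :
    tropMul F (xLow m t s) i j =
      if j.val = t then F i j ⊔ (F i ⟨t + 1, ht⟩ + s) else F i j := by
  split_ifs with hj
  · have hne : j ≠ ⟨t + 1, ht⟩ := Fin.ne_of_val_ne (by simp; omega)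
    rw [tropMul_apply_eq_sup_of_support _ _ {j, ⟨t + 1, ht⟩} fun k hk => by
      simp only [mem_insert, mem_singleton, not_or] at hk
      simp [xLow, hk.1, hj, show k.val ≠ t + 1 from fun h => hk.2 (Fin.ext h)]]
    simp [xLow, hne.symm, hj]
  · rw [tropMul_apply_eq_sup_of_support _ _ {j} fun k hk => by
      simp [xLow, show k ≠ j by simpa using hk, hj]]
    simp [xLow]

end TropicalMatrix

section TransferMatrix

lemma wnat_eq {n : ℕ} (W : Matrix (Fin n) (Fin n) ℝ) {a b : ℕ} (ha : a < n) (hb : b < n) :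
    wnat n W a b = W ⟨a, ha⟩ ⟨b, hb⟩ := by
  simp [wnat, ha, hb]

@[simp]
lemma wnat_val {n : ℕ} (W : Matrix (Fin n) (Fin n) ℝ) (a b : Fin n) : wnat n W a b = W a b :=
  wnat_eq W a.isLt b.isLt

lemma foldl_xDiag {n : ℕ} (F : Matrix (Fin n) (Fin n) (WithBot ℝ)) (s : ℕ → ℝ) (q : ℕ) :
    ((List.range q).map fun t => xDiag n t (s t)).foldl tropMul F =
      Matrix.of fun i j => F i j + if j.val < q then (s j : WithBot ℝ) else 0 := by
  induction q with
  | zero => ext; simp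
  | succ q ih =>
    rw [List.range_succ, List.map_append, List.foldl_append, ih]
    ext i j
    show tropMul _ (xDiag n q (s q)) i j = _
    rw [tropMul_xDiag_apply, Matrix.of_apply, Matrix.of_apply]
    rcases lt_trichotomy j.val q with h | h | h
    · simp [h, h.ne, h.trans (Nat.lt_succ_self q)]
    · simp [h]
    · simp [h.ne', show ¬ j.val < q by omega, show ¬ j.val < q + 1 by omega]

lemma Dmat_apply {n : ℕ} (W : Matrix (Fin n) (Fin n) ℝ) (a b : Fin n) :
    Dmat n W a b = if a = b then (W a a : WithBot ℝ) else ⊥ := by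
  rw [Dmat, foldl_xDiag]
  split_ifs with h <;> simp [tropId, h]

lemma Tmat_apply {n : ℕ} (W : Matrix (Fin n) (Fin n) ℝ) (i j : Fin n) :
    Tmat n W i j = univ.sup fun c => Lmat n W i c + W c c + Lmat n Wᵀ j c := by
  rw [Tmat, tropMul]
  refine Finset.sup_congr rfl fun c _ => ?_
  rw [tropMul_apply_eq_sup_of_support _ _ {c} fun k hk => by
    simp [Dmat_apply, show k ≠ c by simpa using hk]]
  simp [Dmat_apply]

end TransferMatrix

section DiagCons

variable {n : ℕ}

/-- The tropical block-diagonal matrix `diag(0, M)`. -/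
def tropDiagCons (M : Matrix (Fin n) (Fin n) (WithBot ℝ)) :
    Matrix (Fin (n + 1)) (Fin (n + 1)) (WithBot ℝ) :=
  Fin.cases (Fin.cases 0 fun _ => ⊥) fun a => Fin.cases ⊥ fun b => M a b

variable (M : Matrix (Fin n) (Fin n) (WithBot ℝ))

@[simp] lemma tropDiagCons_zero_zero : tropDiagCons M 0 0 = 0 := rfl

@[simp] lemma tropDiagCons_zero_succ (b : Fin n) : tropDiagCons M 0 b.succ = ⊥ := rfl

@[simp] lemma tropDiagCons_succ_zero (a : Fin n) : tropDiagCons M a.succ 0 = ⊥ := rfl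

@[simp] lemma tropDiagCons_succ_succ (a b : Fin n) : tropDiagCons M a.succ b.succ = M a b := rfl

lemma tropDiagCons_tropMul (N : Matrix (Fin n) (Fin n) (WithBot ℝ)) :
    tropDiagCons (tropMul M N) = tropMul (tropDiagCons M) (tropDiagCons N) := by
  ext a b
  cases a using Fin.cases <;> cases b using Fin.cases <;>
    simp [tropMul, Fin.univ_succ, Function.comp_def]

lemma tropDiagCons_tropId : tropDiagCons (tropId n) = tropId (n + 1) := by
  ext a b
  cases a using Fin.cases <;> cases b using Fin.cases <;>
    simp [tropId, Fin.succ_ne_zero, eq_comm (a := (0 : Fin _))]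

lemma tropDiagCons_xLow (t : ℕ) (s : ℝ) :
    tropDiagCons (xLow n t s) = xLow (n + 1) (t + 1) s := by
  ext a b
  cases a using Fin.cases <;> cases b using Fin.cases <;>
    simp [xLow, Fin.succ_ne_zero, eq_comm (a := (0 : Fin _))]

lemma foldl_tropDiagCons (L : List (Matrix (Fin n) (Fin n) (WithBot ℝ))) :
    (L.map tropDiagCons).foldl tropMul (tropDiagCons M) = tropDiagCons (L.foldl tropMul M) := by
  rw [List.foldl_map]
  exact List.foldl_hom _ fun x y => (tropDiagCons_tropMul x y).symm

end DiagCons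

section LowerFactor

lemma foldl_xLow_apply {n : ℕ} (F : Matrix (Fin n) (Fin n) (WithBot ℝ)) (s : ℕ → ℝ) {q : ℕ}
    (hq : q < n) (i j : Fin n) :
    ((List.range q).map fun t => xLow n t (s t)).foldl tropMul F i j =
      if h : j.val < q then F i j ⊔ (F i ⟨j + 1, by omega⟩ + s j) else F i j := by
  induction q generalizing j with
  | zero => simp
  | succ q ih =>
    rw [List.range_succ, List.map_append, List.foldl_append, List.map_singleton,
      List.foldl_cons, List.foldl_nil, tropMul_xLow_apply _ (by omega), ih (by omega),
      ih (by omega)]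
    rcases lt_trichotomy j.val q with h | h | h
    · simp [h, h.ne, h.trans (Nat.lt_succ_self q)]
    · simp [h]
    · simp [h.ne', show ¬ j.val < q by omega, show ¬ j.val < q + 1 by omega]

lemma wnat_submatrix_succ_castSucc {n : ℕ} (W : Matrix (Fin (n + 2)) (Fin (n + 2)) ℝ) {r c : ℕ}
    (hr : r < n + 1) (hc : c < n + 1) :
    wnat (n + 1) (W.submatrix Fin.succ Fin.castSucc) r c = wnat (n + 2) W (r + 1) c := by
  rw [wnat_eq _ hr hc, wnat_eq _ (by omega) (by omega)]
  rfl

/-- All blocks of factors of `L(W)` but the last one, `x̄_1(W_{2,1}) ⋯ x̄_{n+1}(W_{n+2,n+1})`, are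
those of `L(W')` acting on the last `n + 1` coordinates, where `W'` is `W` without its first row
and last column. -/
lemma Lmat_succ_succ {n : ℕ} (W : Matrix (Fin (n + 2)) (Fin (n + 2)) ℝ) :
    Lmat (n + 2) W =
      ((List.range (n + 1)).map fun t => xLow (n + 2) t (wnat (n + 2) W (t + 1) t)).foldl tropMul
        (tropDiagCons (Lmat (n + 1) (W.submatrix Fin.succ Fin.castSucc))) := by
  have hlast : ((List.range (n + 1)).map fun t =>
      xLow (n + 2) (n + 2 - n + t - 2) (wnat (n + 2) W (n + 2 - n + t - 1) t)) =
      (List.range (n + 1)).map fun t => xLow (n + 2) t (wnat (n + 2) W (t + 1) t) :=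
    List.map_congr_left fun t _ => by
      rw [show n + 2 - n + t - 2 = t by omega, show n + 2 - n + t - 1 = t + 1 by omega]
  have hblocks : (List.range n).flatMap (fun k => (List.range (k + 1)).map fun t =>
      xLow (n + 2) (n + 2 - k + t - 2) (wnat (n + 2) W (n + 2 - k + t - 1) t)) =
      ((List.range n).flatMap fun k => (List.range (k + 1)).map fun t =>
        xLow (n + 1) (n + 1 - k + t - 2)
          (wnat (n + 1) (W.submatrix Fin.succ Fin.castSucc) (n + 1 - k + t - 1) t)).map
        tropDiagCons := by
    rw [List.map_flatMap]
    refine List.flatMap_congr fun k hk => ?_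
    rw [List.map_map]
    refine List.map_congr_left fun t ht => ?_
    rw [List.mem_range] at hk ht
    rw [Function.comp_apply, tropDiagCons_xLow,
      wnat_submatrix_succ_castSucc W (by omega) (by omega),
      show n + 1 - k + t - 2 + 1 = n + 2 - k + t - 2 by omega,
      show n + 1 - k + t - 1 + 1 = n + 2 - k + t - 1 by omega]
  rw [Lmat, show n + 2 - 1 = n + 1 from rfl]
  conv_lhs => rw [List.range_succ]
  rw [List.flatMap_append, List.flatMap_singleton, hlast, List.foldl_append, hblocks,
    ← tropDiagCons_tropId, foldl_tropDiagCons]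
  rfl

end LowerFactor

section LowerPaths

variable {n : ℕ}

/-- The weight of the path of the network of `L(W)` from source `i` straight down to sink `j`. -/
def lowerPathWeight (n : ℕ) (W : Matrix (Fin n) (Fin n) ℝ) (i j : ℕ) : ℝ :=
  ∑ r ∈ Ioc j i, wnat n W r j

def lowerPathMatrix (n : ℕ) (W : Matrix (Fin n) (Fin n) ℝ) :
    Matrix (Fin n) (Fin n) (WithBot ℝ) :=
  Matrix.of fun i j => if j ≤ i then (lowerPathWeight n W i j : WithBot ℝ) else ⊥

/-- The row half of the weak parallelogram inequalities: unlike the whole, it passes to the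
submatrix `W'` of `Lmat_succ_succ`. -/
def WeakLowerPara (n : ℕ) (W : Matrix (Fin n) (Fin n) ℝ) : Prop :=
  ∀ r c : ℕ, r < n → c + 2 ≤ r → wnat n W r c ≤ wnat n W r (c + 1)

@[simp] lemma lowerPathWeight_self (W : Matrix (Fin n) (Fin n) ℝ) (i : ℕ) :
    lowerPathWeight n W i i = 0 := by
  simp [lowerPathWeight]

lemma sum_Ioc_add_one_add_one {M : Type*} [AddCommMonoid M] (f : ℕ → M) (a b : ℕ) :
    ∑ r ∈ Ioc (a + 1) (b + 1), f r = ∑ r ∈ Ioc a b, f (r + 1) := by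
  rw [← map_add_right_Ioc, sum_map]
  rfl

lemma lowerPathWeight_succ (W : Matrix (Fin (n + 2)) (Fin (n + 2)) ℝ) {i j : ℕ} (hji : j ≤ i)
    (hi : i < n + 1) :
    lowerPathWeight (n + 2) W (i + 1) j =
      lowerPathWeight (n + 1) (W.submatrix Fin.succ Fin.castSucc) i j +
        wnat (n + 2) W (j + 1) j := by
  rw [lowerPathWeight, ← insert_Ioc_add_one_left_eq_Ioc (by omega), sum_insert (by simp),
    sum_Ioc_add_one_add_one, add_comm, lowerPathWeight]
  congr 1
  refine sum_congr rfl fun r hr => ?_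
  rw [mem_Ioc] at hr
  rw [wnat_submatrix_succ_castSucc W (by omega) (by omega)]

lemma WeakLowerPara.lowerPathWeight_le_succ {W : Matrix (Fin (n + 2)) (Fin (n + 2)) ℝ}
    (hW : WeakLowerPara (n + 2) W) {i j : ℕ} (hi : i < n + 1) :
    lowerPathWeight (n + 1) (W.submatrix Fin.succ Fin.castSucc) i j ≤
      lowerPathWeight (n + 2) W (i + 1) (j + 1) := by
  rw [lowerPathWeight, lowerPathWeight, sum_Ioc_add_one_add_one]
  refine sum_le_sum fun r hr => ?_
  rw [mem_Ioc] at hr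
  rw [wnat_submatrix_succ_castSucc W (by omega) (by omega)]
  exact hW _ _ (by omega) (by omega)

lemma WeakLowerPara.submatrix_succ_castSucc {W : Matrix (Fin (n + 2)) (Fin (n + 2)) ℝ}
    (hW : WeakLowerPara (n + 2) W) :
    WeakLowerPara (n + 1) (W.submatrix Fin.succ Fin.castSucc) := by
  intro r c hr hc
  rw [wnat_submatrix_succ_castSucc W hr (by omega), wnat_submatrix_succ_castSucc W hr (by omega)]
  exact hW _ _ (by omega) (by omega)

lemma lowerPathMatrix_apply_last (W : Matrix (Fin (n + 2)) (Fin (n + 2)) ℝ) (i : Fin (n + 2)) :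
    lowerPathMatrix (n + 2) W i (Fin.last _) =
      tropDiagCons (lowerPathMatrix (n + 1) (W.submatrix Fin.succ Fin.castSucc)) i (Fin.last _) := by
  cases i using Fin.cases with
  | zero => simp [lowerPathMatrix, ← Fin.succ_last]
  | succ i =>
    simp only [lowerPathMatrix, ← Fin.succ_last, tropDiagCons_succ_succ, Matrix.of_apply,
      Fin.succ_le_succ_iff]
    split_ifs with h
    · simp [le_antisymm (Fin.le_last i) h]
    · rfl

lemma WeakLowerPara.lowerPathMatrix_apply_castSucc {W : Matrix (Fin (n + 2)) (Fin (n + 2)) ℝ}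
    (hW : WeakLowerPara (n + 2) W) (i : Fin (n + 2)) (j : Fin (n + 1)) :
    lowerPathMatrix (n + 2) W i j.castSucc =
      tropDiagCons (lowerPathMatrix (n + 1) (W.submatrix Fin.succ Fin.castSucc)) i j.castSucc ⊔
        (tropDiagCons (lowerPathMatrix (n + 1) (W.submatrix Fin.succ Fin.castSucc)) i j.succ +
          wnat (n + 2) W (j + 1) j) := by
  cases i using Fin.cases with
  | zero =>
    cases j using Fin.cases with
    | zero => simp only [tropDiagCons_zero_succ]; simp [lowerPathMatrix]
    | succ j => simp [lowerPathMatrix]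
  | succ i =>
    cases j using Fin.cases with
    | zero =>
      simp only [lowerPathMatrix, Fin.castSucc_zero, tropDiagCons_succ_zero,
        tropDiagCons_succ_succ, Matrix.of_apply, Fin.zero_le, if_true, bot_sup_eq,
        ← WithBot.coe_add, Fin.val_succ, Fin.val_zero]
      rw [lowerPathWeight_succ W (Nat.zero_le _) i.isLt]
    | succ j =>
      simp only [lowerPathMatrix, ← Fin.succ_castSucc, tropDiagCons_succ_succ, Matrix.of_apply,
        Fin.succ_le_succ_iff, Fin.val_succ, Fin.val_castSucc]
      split_ifs with h h' h'
      · rw [Fin.le_def, Fin.val_succ] at h'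
        rw [← WithBot.coe_add, ← lowerPathWeight_succ W h' i.isLt]
        exact (sup_eq_right.mpr (WithBot.coe_le_coe.mpr (hW.lowerPathWeight_le_succ i.isLt))).symm
      · have hij : (j : ℕ) = i := by
          rw [Fin.le_def, Fin.val_castSucc] at h
          rw [Fin.le_def, Fin.val_succ] at h'
          omega
        simp [hij]
      · exact absurd (Fin.castSucc_lt_succ.le.trans h') h
      · simp

lemma foldl_xLow_tropDiagCons_lowerPathMatrix {W : Matrix (Fin (n + 2)) (Fin (n + 2)) ℝ}
    (hW : WeakLowerPara (n + 2) W) :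
    ((List.range (n + 1)).map fun t => xLow (n + 2) t (wnat (n + 2) W (t + 1) t)).foldl tropMul
        (tropDiagCons (lowerPathMatrix (n + 1) (W.submatrix Fin.succ Fin.castSucc))) =
      lowerPathMatrix (n + 2) W := by
  ext i j
  rw [foldl_xLow_apply _ _ (by omega)]
  induction j using Fin.lastCases with
  | last => rw [dif_neg (by simp), lowerPathMatrix_apply_last]
  | cast j =>
    rw [dif_pos (show (j.castSucc : ℕ) < n + 1 from j.isLt), hW.lowerPathMatrix_apply_castSucc]
    rfl

theorem Lmat_eq_lowerPathMatrix :
    ∀ {n : ℕ} {W : Matrix (Fin n) (Fin n) ℝ}, WeakLowerPara n W → Lmat n W = lowerPathMatrix n W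
  | 0, _, _ => by ext i; exact i.elim0
  | 1, W, _ => by
    ext i j
    rw [Subsingleton.elim i 0, Subsingleton.elim j 0]
    simp [Lmat, lowerPathMatrix, tropId]
  | _ + 2, _, hW => by
    rw [Lmat_succ_succ, Lmat_eq_lowerPathMatrix hW.submatrix_succ_castSucc,
      foldl_xLow_tropDiagCons_lowerPathMatrix hW]

end LowerPaths

section UppermostPaths

variable {n : ℕ} {W : Matrix (Fin n) (Fin n) ℝ}

lemma wnat_transpose (W : Matrix (Fin n) (Fin n) ℝ) (a b : ℕ) : wnat n Wᵀ a b = wnat n W b a := by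
  unfold wnat
  by_cases h : a < n ∧ b < n
  · rw [dif_pos h, dif_pos h.symm]
    rfl
  · rw [dif_neg h, dif_neg fun h' => h h'.symm]

lemma WeakPara.weakLowerPara (hP : WeakPara n W) : WeakLowerPara n W := by
  intro r c hr hc
  rw [wnat_eq _ hr (by omega), wnat_eq _ hr (by omega)]
  exact (hP ⟨r, hr⟩ ⟨c, by omega⟩ hc).1

lemma WeakPara.weakLowerPara_transpose (hP : WeakPara n W) : WeakLowerPara n Wᵀ := by
  intro r c hr hc
  rw [wnat_transpose, wnat_transpose, wnat_eq _ (by omega) hr, wnat_eq _ (by omega) hr]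
  exact (hP ⟨r, hr⟩ ⟨c, by omega⟩ hc).2

lemma WeakTrapeze.wnat_le (hT : WeakTrapeze n W) {c : ℕ} (hc : c + 1 < n) :
    wnat n W (c + 1) c + wnat n W c c + wnat n W c (c + 1) ≤ wnat n W (c + 1) (c + 1) := by
  rw [wnat_eq _ hc (by omega), wnat_eq _ (by omega) (by omega), wnat_eq _ (by omega) hc,
    wnat_eq _ hc hc]
  exact hT ⟨c + 1, hc⟩ c.succ_pos

lemma WeakLowerPara.lowerPathWeight_le_add (hW : WeakLowerPara n W) {i c : ℕ} (hci : c < i)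
    (hi : i < n) :
    lowerPathWeight n W i c ≤ wnat n W (c + 1) c + lowerPathWeight n W i (c + 1) := by
  rw [lowerPathWeight, lowerPathWeight, ← insert_Ioc_add_one_left_eq_Ioc hci, sum_insert (by simp)]
  refine add_le_add_right (sum_le_sum fun r hr => ?_) _
  rw [mem_Ioc] at hr
  exact hW r c (by omega) (by omega)

/-- The weight of the path of `G_n` from source `i` to sink `j` that crosses the diagonal at `c`. -/
def pathWeightVia (n : ℕ) (W : Matrix (Fin n) (Fin n) ℝ) (i j c : ℕ) : ℝ :=
  lowerPathWeight n W i c + wnat n W c c + lowerPathWeight n Wᵀ j c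

lemma pathWeightVia_transpose (i j c : ℕ) : pathWeightVia n Wᵀ j i c = pathWeightVia n W i j c := by
  rw [pathWeightVia, pathWeightVia, Matrix.transpose_transpose, wnat_transpose]
  ring

/-- Crossing the diagonal as late as possible is best: this is where the weak trapeze and
parallelogram inequalities enter. -/
lemma pathWeightVia_le_succ (hT : WeakTrapeze n W) (hP : WeakPara n W) {i j c : ℕ}
    (hci : c < i) (hcj : c < j) (hi : i < n) (hj : j < n) :
    pathWeightVia n W i j c ≤ pathWeightVia n W i j (c + 1) := by
  have hrow := hP.weakLowerPara.lowerPathWeight_le_add hci hi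
  have hcol := hP.weakLowerPara_transpose.lowerPathWeight_le_add hcj hj
  have htrap := hT.wnat_le (c := c) (by omega)
  rw [wnat_transpose] at hcol
  rw [pathWeightVia, pathWeightVia]
  linarith

lemma pathWeightVia_le_min (hT : WeakTrapeze n W) (hP : WeakPara n W) (i j : Fin n) {c : ℕ}
    (hc : c ≤ (min i j : Fin n)) :
    pathWeightVia n W i j c ≤ pathWeightVia n W i j (min i j : Fin n) := by
  rw [Fin.coe_min] at hc ⊢
  refine monotoneOn_of_le_add_one Set.ordConnected_Iic (fun d _ _ hd => ?_)
    (Set.mem_Iic.mpr hc) (Set.mem_Iic.mpr le_rfl) hc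
  rw [Set.mem_Iic, le_min_iff] at hd
  exact pathWeightVia_le_succ hT hP (by omega) (by omega) i.isLt j.isLt

lemma psi_transpose (i j : Fin n) : psi n Wᵀ i j = psi n W j i := by
  unfold psi
  split_ifs with h h' h'
  · simp [le_antisymm h h']
  · rfl
  · rfl
  · exact absurd (le_total i j) (by tauto)

lemma psi_apply_of_le {i j : Fin n} (h : j ≤ i) :
    psi n W i j = wnat n W j j + lowerPathWeight n W i j := by
  have hcol : psi n W i j = ∑ t ∈ Icc j i, W t j := by
    unfold psi
    split_ifs with h'
    · obtain rfl := le_antisymm h' h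
      simp
    · rfl
  rw [hcol, lowerPathWeight, ← sum_cons (f := fun r => wnat n W r j) left_notMem_Ioc,
    ← Icc_eq_cons_Ioc (Fin.le_def.mp h), ← Fin.map_valEmbedding_Icc, sum_map]
  simp

lemma psi_eq_pathWeightVia_min (i j : Fin n) :
    psi n W i j = pathWeightVia n W i j (min i j : Fin n) := by
  rcases le_total j i with h | h
  · rw [psi_apply_of_le h, pathWeightVia, min_eq_right h, lowerPathWeight_self]
    ring
  · rw [← psi_transpose, psi_apply_of_le h, ← pathWeightVia_transpose, pathWeightVia,
      min_eq_left h, lowerPathWeight_self]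
    ring

theorem Tmat_eq_psi (hT : WeakTrapeze n W) (hP : WeakPara n W) :
    Tmat n W = (psi n W).map ((↑) : ℝ → WithBot ℝ) := by
  ext i j
  rw [Tmat_apply, Lmat_eq_lowerPathMatrix hP.weakLowerPara,
    Lmat_eq_lowerPathMatrix hP.weakLowerPara_transpose, Matrix.map_apply,
    psi_eq_pathWeightVia_min]
  refine le_antisymm (Finset.sup_le fun c _ => ?_) ?_
  · simp only [lowerPathMatrix, Matrix.of_apply]
    split_ifs with hci hcj
    · rw [← wnat_val W c c, ← WithBot.coe_add, ← WithBot.coe_add, WithBot.coe_le_coe]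
      exact pathWeightVia_le_min hT hP i j (Fin.le_def.mp (le_min hci hcj))
    all_goals simp
  · refine le_trans (le_of_eq ?_) (le_sup (mem_univ (min i j)))
    simp only [lowerPathMatrix, Matrix.of_apply, min_le_left, min_le_right, if_true,
      pathWeightVia, WithBot.coe_add, wnat_val]

end UppermostPaths

section Phi

variable {n : ℕ} {A : Matrix (Fin n) (Fin n) ℝ}

@[simp] lemma phi_apply_self (A : Matrix (Fin n) (Fin n) ℝ) (i : Fin n) : phi n A i i = A i i := by
  simp [phi]

lemma phi_apply_of_lt (A : Matrix (Fin n) (Fin n) ℝ) {i j : Fin n} (h : j < i) :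
    phi n A i j = A i j - A (fpred i) j := by
  rw [phi, if_neg h.ne', if_neg h.not_gt]

lemma phi_apply_of_gt (A : Matrix (Fin n) (Fin n) ℝ) {i j : Fin n} (h : i < j) :
    phi n A i j = A i j - A i (fpred j) := by
  rw [phi, if_neg h.ne, if_pos h]

lemma phi_transpose (A : Matrix (Fin n) (Fin n) ℝ) : phi n Aᵀ = (phi n A)ᵀ := by
  ext i j
  rcases lt_trichotomy i j with h | rfl | h
  · rw [Matrix.transpose_apply, phi_apply_of_gt _ h, phi_apply_of_lt _ h]
    rfl
  · simp
  · rw [Matrix.transpose_apply, phi_apply_of_lt _ h, phi_apply_of_gt _ h]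
    rfl

lemma tropPermSup_two_one (B : Matrix (Fin 2) (Fin 2) (WithBot ℝ)) :
    tropPermSup 2 1 B = B 0 0 + B 1 1 := by
  rw [tropPermSup, show (univ.filter fun σ : Equiv.Perm (Fin 2) => σ.sign = 1) = {1} by decide,
    sup_singleton, Fin.sum_univ_two]
  rfl

lemma tropPermSup_two_neg_one (B : Matrix (Fin 2) (Fin 2) (WithBot ℝ)) :
    tropPermSup 2 (-1) B = B 0 1 + B 1 0 := by
  rw [tropPermSup,
    show (univ.filter fun σ : Equiv.Perm (Fin 2) => σ.sign = -1) = {Equiv.swap 0 1} by decide,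
    sup_singleton, Fin.sum_univ_two]
  simp

/-- The `2 × 2` minors give the Monge property. -/
lemma IsTropTN.add_le_add (hA : IsTropTN n (A.map ((↑) : ℝ → WithBot ℝ))) {a b c d : Fin n}
    (hab : a < b) (hcd : c < d) : A a d + A b c ≤ A a c + A b d := by
  have h := hA 2 ![a, b] ![c, d] (by simpa [Fin.strictMono_iff_lt_succ] using hab)
    (by simpa [Fin.strictMono_iff_lt_succ] using hcd)
  simp only [tropPermSup_two_one, tropPermSup_two_neg_one, Matrix.submatrix_apply,
    Matrix.map_apply, Matrix.cons_val_zero, Matrix.cons_val_one] at h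
  exact_mod_cast h

lemma fpred_lt {i : Fin n} (hi : 0 < i.val) : fpred i < i :=
  Fin.lt_def.mpr (Nat.sub_lt hi one_pos)

lemma IsTropTN.weakTrapeze_phi (hA : IsTropTN n (A.map ((↑) : ℝ → WithBot ℝ))) :
    WeakTrapeze n (phi n A) := by
  intro i hi
  rw [phi_apply_of_lt A (fpred_lt hi), phi_apply_of_gt A (fpred_lt hi), phi_apply_self,
    phi_apply_self]
  linarith [hA.add_le_add (fpred_lt hi) (fpred_lt hi)]

lemma IsTropTN.weakPara_phi (hA : IsTropTN n (A.map ((↑) : ℝ → WithBot ℝ))) :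
    WeakPara n (phi n A) := by
  intro i j h
  set j' : Fin n := ⟨j.val + 1, by omega⟩
  have hjj' : j < j' := Fin.lt_def.mpr (Nat.lt_succ_self _)
  have hji : j < i := Fin.lt_def.mpr (by omega)
  have hj'i : j' < i := Fin.lt_def.mpr (by simp [j']; omega)
  have hpi : fpred i < i := fpred_lt (by omega)
  constructor
  · rw [phi_apply_of_lt A hji, phi_apply_of_lt A hj'i]
    linarith [hA.add_le_add hpi hjj']
  · rw [phi_apply_of_gt A hji, phi_apply_of_gt A hj'i]
    linarith [hA.add_le_add hjj' hpi]

lemma sum_Ioc_sub_pred {G : Type*} [AddCommGroup G] (f : ℕ → G) {a b : ℕ} (h : a ≤ b) :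
    ∑ r ∈ Ioc a b, (f r - f (r - 1)) = f b - f a := by
  induction b, h using Nat.le_induction with
  | base => simp
  | succ b hab ih =>
    rw [sum_Ioc_succ_top hab, ih, Nat.add_sub_cancel]
    abel

lemma lowerPathWeight_phi (A : Matrix (Fin n) (Fin n) ℝ) {i j : ℕ} (hji : j ≤ i) (hi : i < n) :
    lowerPathWeight n (phi n A) i j = wnat n A i j - wnat n A j j := by
  rw [lowerPathWeight, ← sum_Ioc_sub_pred (fun r => wnat n A r j) hji]
  refine sum_congr rfl fun r hr => ?_
  rw [mem_Ioc] at hr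
  rw [wnat_eq _ (by omega) (by omega), wnat_eq _ (by omega) (by omega),
    wnat_eq _ (by omega) (by omega), phi_apply_of_lt A (Fin.lt_def.mpr hr.1)]
  rfl

lemma psi_phi_of_le (A : Matrix (Fin n) (Fin n) ℝ) {i j : Fin n} (h : j ≤ i) :
    psi n (phi n A) i j = A i j := by
  rw [psi_apply_of_le h, lowerPathWeight_phi A h i.isLt]
  simp

theorem psi_phi (A : Matrix (Fin n) (Fin n) ℝ) : psi n (phi n A) = A := by
  ext i j
  rcases le_total j i with h | h
  · exact psi_phi_of_le A h
  · rw [← psi_transpose, ← phi_transpose, psi_phi_of_le _ h, Matrix.transpose_apply]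

end Phi

/-- every tropical totally nonnegative matrix with real entries is
the tropical transfer matrix of the canonical planar network, with weights
`φ(A)` satisfying the weak trapeze and parallelogram inequalities. -/
theorem TN_is_transfer_matrix (n : ℕ) (A : Matrix (Fin n) (Fin n) ℝ)
    (hA : IsTropTN n (A.map ((↑) : ℝ → WithBot ℝ))) :
    (WeakTrapeze n (phi n A) ∧ WeakPara n (phi n A)) ∧
      Tmat n (phi n A) = A.map ((↑) : ℝ → WithBot ℝ) := by
  have hT := hA.weakTrapeze_phi
  have hP := hA.weakPara_phi
  exact ⟨⟨hT, hP⟩, by rw [Tmat_eq_psi hT hP, psi_phi]⟩
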